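/- arXiv:2102.12913 — 3 statements merged into one kernel-verified Lean document; each statement's English description precedes it below -/
import Mathlib

section
/- For w ≥ 0 and n ≥ 2w + 1, the number of nonnegative-integer matrices of size (w+1) × (w+1) with row sums (n-w, 1, 1, ..., 1) and column sums (n-w, 1, 1, ..., 1) equals u(w) = ∑_{i=0}^{w} C(w,i)^2 · i!, where C(w,i) is the binomial coefficient. In particular this count is independent of n. -/
open Finset

namespace HookAux

variable {w : ℕ}

/-- Injectivity on the `some` part. -/
def PInj (f : Fin w → Option (Fin w)) : Prop :=
  ∀ a b c, f a = some c → f b = some c → a = b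

/-- The hook matrix associated to a partial injection. -/
noncomputable def mk (w n : ℕ) (f : Fin w → Option (Fin w)) :
    Matrix (Fin (w + 1)) (Fin (w + 1)) ℕ :=
  Matrix.of fun i j =>
    (finSuccEquiv w i).elim
      ((finSuccEquiv w j).elim
        (n - 2 * w + #(univ.filter fun a => (f a).isSome))
        (fun b => if ∃ a, f a = some b then 0 else 1))
      (fun a => if f a = finSuccEquiv w j then 1 else 0)

lemma mk_succ (n : ℕ) (f : Fin w → Option (Fin w)) (a : Fin w) (j : Fin (w + 1)) :
    mk w n f a.succ j = if f a = finSuccEquiv w j then 1 else 0 := by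
  simp [mk]

lemma mk_zero_succ (n : ℕ) (f : Fin w → Option (Fin w)) (b : Fin w) :
    mk w n f 0 b.succ = if ∃ a, f a = some b then 0 else 1 := by
  simp [mk]

lemma mk_zero_zero (n : ℕ) (f : Fin w → Option (Fin w)) :
    mk w n f 0 0 = n - 2 * w + #(univ.filter fun a => (f a).isSome) := by
  simp [mk]

lemma sum_split (v : Fin (w + 1) → ℕ) : ∑ i, v i = v 0 + ∑ a : Fin w, v (a.succ) := by
  rw [← (finSuccEquiv w).symm.sum_comp v, Fintype.sum_option]
  simp [finSuccEquiv_symm_none, finSuccEquiv_symm_some]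

lemma sum_eq_one_unique {m : ℕ} {g : Fin m → ℕ} (h : ∑ j, g j = 1) :
    ∀ {j j'}, g j ≠ 0 → g j' ≠ 0 → j = j' := by
  classical
  intro j j' hj hj'
  by_contra hne
  have h2 : g j + g j' ≤ ∑ x, g x := by
    rw [← Finset.sum_pair hne]
    exact Finset.sum_le_sum_of_subset (subset_univ _)
  omega

lemma entry_le_one {m : ℕ} {g : Fin m → ℕ} (h : ∑ j, g j = 1) (j : Fin m) : g j ≤ 1 :=
  h ▸ Finset.single_le_sum (fun _ _ => Nat.zero_le _) (mem_univ j)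

lemma sum_fiber {f : Fin w → Option (Fin w)} (hf : PInj f) (b : Fin w) :
    ∑ a, (if f a = some b then (1 : ℕ) else 0) = if ∃ a, f a = some b then 1 else 0 := by
  classical
  by_cases h : ∃ a, f a = some b
  · obtain ⟨a₀, ha₀⟩ := h
    have he : ∀ a : Fin w, (if f a = some b then (1 : ℕ) else 0) = if a₀ = a then 1 else 0 := by
      intro a
      by_cases ha : f a = some b
      · simp [ha, hf a₀ a b ha₀ ha]
      · have : a₀ ≠ a := fun e => ha (e ▸ ha₀)
        simp [ha, this]
    rw [Finset.sum_congr rfl fun a _ => he a, Finset.sum_ite_eq,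
      if_pos (Finset.mem_univ a₀), if_pos ⟨a₀, ha₀⟩]
  · push_neg at h
    simp [h]

lemma count_eq {f : Fin w → Option (Fin w)} (hf : PInj f) :
    #(univ.filter fun b => ∃ a, f a = some b) = #(univ.filter fun a => (f a).isSome) := by
  classical
  rw [Finset.card_filter, Finset.card_filter]
  have h1 : ∀ b : Fin w, (if ∃ a, f a = some b then (1:ℕ) else 0)
      = ∑ a, (if f a = some b then 1 else 0) := fun b => (sum_fiber hf b).symm
  rw [Finset.sum_congr rfl fun b _ => h1 b, Finset.sum_comm]
  refine Finset.sum_congr rfl fun a _ => ?_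
  cases ha : f a with
  | none => simp [ha]
  | some c => simp [ha, Finset.sum_ite_eq]

lemma k_le {f : Fin w → Option (Fin w)} : #(univ.filter fun a => (f a).isSome) ≤ w := by
  calc #(univ.filter fun a => (f a).isSome) ≤ #(univ : Finset (Fin w)) :=
        Finset.card_filter_le _ _
    _ = w := by simp

lemma none_card {f : Fin w → Option (Fin w)} :
    #(univ.filter fun a => f a = none) = w - #(univ.filter fun a => (f a).isSome) := by
  classical
  have h := Finset.card_filter_add_card_filter_not
    (s := (univ : Finset (Fin w))) (p := fun a => (f a).isSome)
  have h2 : (univ.filter fun a => ¬ (f a).isSome) = (univ.filter fun a => f a = none) := by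
    apply Finset.filter_congr; intro a _; simp [Option.not_isSome_iff_eq_none]
  rw [h2] at h
  simp only [Finset.card_univ, Fintype.card_fin] at h
  omega

lemma mk_row {n : ℕ} (hn : 2 * w + 1 ≤ n) {f : Fin w → Option (Fin w)} (hf : PInj f) :
    ∀ i, ∑ j, mk w n f i j = if i = 0 then n - w else 1 := by
  classical
  intro i
  rw [sum_split (v := fun j => mk w n f i j)]
  induction i using Fin.cases with
  | zero =>
      rw [if_pos rfl, mk_zero_zero]
      have h1 : ∑ b : Fin w, mk w n f 0 b.succ
          = #(univ.filter fun b => ¬ ∃ a, f a = some b) := by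
        rw [Finset.card_filter]
        refine Finset.sum_congr rfl fun b _ => ?_
        rw [mk_zero_succ]
        by_cases h : ∃ a, f a = some b <;> simp [h]
      have h2 : #(univ.filter fun b => ∃ a, f a = some b)
          + #(univ.filter fun b => ¬ ∃ a, f a = some b) = w := by
        simpa using Finset.card_filter_add_card_filter_not
          (s := (univ : Finset (Fin w))) (p := fun b => ∃ a, f a = some b)
      rw [count_eq hf] at h2
      have hkw := k_le (f := f)
      rw [h1]
      omega
  | succ a =>
      rw [if_neg (Fin.succ_ne_zero a), mk_succ]
      have h1 : ∀ b : Fin w, mk w n f a.succ b.succ = if f a = some b then 1 else 0 := by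
        intro b; rw [mk_succ, finSuccEquiv_succ]
      rw [Finset.sum_congr rfl fun b _ => h1 b, finSuccEquiv_zero]
      cases ha : f a with
      | none => simp [ha]
      | some c => simp [ha, Finset.sum_ite_eq]

lemma mk_col {n : ℕ} (hn : 2 * w + 1 ≤ n) {f : Fin w → Option (Fin w)} (hf : PInj f) :
    ∀ j, ∑ i, mk w n f i j = if j = 0 then n - w else 1 := by
  classical
  intro j
  rw [sum_split (v := fun i => mk w n f i j)]
  induction j using Fin.cases with
  | zero =>
      rw [if_pos rfl, mk_zero_zero]
      have h1 : ∑ a : Fin w, mk w n f a.succ 0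
          = #(univ.filter fun a => f a = none) := by
        rw [Finset.card_filter]
        refine Finset.sum_congr rfl fun a _ => ?_
        rw [mk_succ, finSuccEquiv_zero]
      rw [h1, none_card]
      have hkw := k_le (f := f)
      omega
  | succ b =>
      rw [if_neg (Fin.succ_ne_zero b), mk_zero_succ]
      have h1 : ∀ a : Fin w, mk w n f a.succ b.succ = if f a = some b then 1 else 0 := by
        intro a; rw [mk_succ, finSuccEquiv_succ]
      rw [Finset.sum_congr rfl fun a _ => h1 a, sum_fiber hf b]
      by_cases h : ∃ a, f a = some b <;> simp [h]

lemma mk_injective {n : ℕ} : Function.Injective (mk w n) := by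
  intro f f' h
  funext a
  have h1 := congrFun (congrFun h a.succ) ((finSuccEquiv w).symm (f a))
  rw [mk_succ, mk_succ, Equiv.apply_symm_apply] at h1
  by_cases hc : f' a = f a
  · exact hc.symm
  · rw [if_pos rfl, if_neg hc] at h1
    exact absurd h1 one_ne_zero

lemma mk_surjective {n : ℕ} (hn : 2 * w + 1 ≤ n)
    (M : Matrix (Fin (w + 1)) (Fin (w + 1)) ℕ)
    (h1 : ∀ i, ∑ j, M i j = if i = 0 then n - w else 1)
    (h2 : ∀ j, ∑ i, M i j = if j = 0 then n - w else 1) :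
    ∃ f : Fin w → Option (Fin w), PInj f ∧ mk w n f = M := by
  classical
  have hrow : ∀ a : Fin w, ∑ j, M a.succ j = 1 := by
    intro a; simpa [Fin.succ_ne_zero] using h1 a.succ
  have hex : ∀ a : Fin w, ∃ j, M a.succ j ≠ 0 := by
    intro a
    by_contra hc
    push_neg at hc
    have h0 : ∑ j, M a.succ j = 0 := Finset.sum_eq_zero fun j _ => hc j
    rw [hrow a] at h0; exact one_ne_zero h0
  set j0 : Fin w → Fin (w + 1) := fun a => Classical.choose (hex a) with hj0def
  have hj0 : ∀ a, M a.succ (j0 a) ≠ 0 := fun a => Classical.choose_spec (hex a)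
  have huniq : ∀ a j, M a.succ j ≠ 0 → j = j0 a := fun a j hj =>
    sum_eq_one_unique (hrow a) hj (hj0 a)
  have hle : ∀ (a : Fin w) (j : Fin (w + 1)), M a.succ j ≤ 1 := by
    intro a j; exact entry_le_one (hrow a) j
  set f : Fin w → Option (Fin w) := fun a => finSuccEquiv w (j0 a) with hfdef
  have hfj0 : ∀ a, f a = finSuccEquiv w (j0 a) := fun a => rfl
  have hfP : PInj f := by
    intro a b c hac hbc
    have ha : j0 a = Fin.succ c := by
      have hh := congrArg (finSuccEquiv w).symm hac
      rw [hfj0, Equiv.symm_apply_apply, finSuccEquiv_symm_some] at hh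
      exact hh
    have hb : j0 b = Fin.succ c := by
      have hh := congrArg (finSuccEquiv w).symm hbc
      rw [hfj0, Equiv.symm_apply_apply, finSuccEquiv_symm_some] at hh
      exact hh
    have hcol : ∑ i, M i c.succ = 1 := by simpa [Fin.succ_ne_zero] using h2 c.succ
    have hsucc : a.succ = b.succ :=
      sum_eq_one_unique (g := fun i => M i c.succ) hcol
        (by rw [← ha]; exact hj0 a) (by rw [← hb]; exact hj0 b)
    exact Fin.succ_injective _ hsucc
  refine ⟨f, hfP, ?_⟩
  have hfval : ∀ a (j : Fin (w+1)), (f a = finSuccEquiv w j) ↔ j0 a = j := by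
    intro a j
    constructor
    · intro h; exact (finSuccEquiv w).injective ((hfj0 a).symm.trans h ▸ h)
    · intro h; rw [hfj0, h]
  have hcolsum : ∀ j : Fin (w+1), ∑ i, M i j = M 0 j + ∑ a : Fin w, M a.succ j :=
    fun j => sum_split (fun i => M i j)
  funext i j
  induction i using Fin.cases with
  | succ a =>
      rw [mk_succ]
      by_cases hj : j0 a = j
      · rw [if_pos ((hfval a j).2 hj)]
        have e1 := hj0 a; have e2 := hle a (j0 a); rw [hj] at e1 e2
        omega
      · rw [if_neg (fun hc => hj ((hfval a j).1 hc))]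
        by_contra hc
        exact hj (huniq a j fun h => hc h.symm).symm
  | zero =>
      induction j using Fin.cases with
      | succ b =>
          rw [mk_zero_succ]
          have hcol : M 0 b.succ + ∑ a : Fin w, M a.succ b.succ = 1 := by
            rw [← hcolsum b.succ]; simpa [Fin.succ_ne_zero] using h2 b.succ
          by_cases h : ∃ a, f a = some b
          · obtain ⟨a, ha⟩ := h
            have hja : j0 a = b.succ := by
              rw [← finSuccEquiv_succ b] at ha
              exact (hfval a b.succ).1 ha
            have e1 : M a.succ b.succ ≠ 0 := by rw [← hja]; exact hj0 a
            have e2 : M a.succ b.succ ≤ ∑ a' : Fin w, M a'.succ b.succ :=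
              Finset.single_le_sum (f := fun a' : Fin w => M a'.succ b.succ)
                (fun _ _ => Nat.zero_le _) (mem_univ a)
            rw [if_pos ⟨a, ha⟩]
            omega
          · have hz : ∑ a : Fin w, M a.succ b.succ = 0 := by
              refine Finset.sum_eq_zero fun a _ => ?_
              by_contra hc
              have hba : b.succ = j0 a := huniq a b.succ hc
              exact h ⟨a, by rw [hfj0, ← hba, finSuccEquiv_succ]⟩
            rw [if_neg h]
            omega
      | zero =>
          rw [mk_zero_zero]
          have hcol0 : M 0 0 + ∑ a : Fin w, M a.succ 0 = n - w := by
            rw [← hcolsum 0]; simpa using h2 0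
          have hterm : ∀ a : Fin w, M a.succ 0 = if f a = none then 1 else 0 := by
            intro a
            by_cases ha : f a = none
            · have hz : j0 a = 0 := by
                rw [← finSuccEquiv_zero (n := w)] at ha
                exact (hfval a 0).1 ha
              rw [if_pos ha, ← hz]
              have e1 := hj0 a; have e2 := hle a (j0 a); omega
            · rw [if_neg ha]
              by_contra hc
              have h0 : (0 : Fin (w+1)) = j0 a := huniq a 0 hc
              exact ha (by rw [hfj0, ← h0, finSuccEquiv_zero])
          have hs : ∑ a : Fin w, M a.succ 0 = #(univ.filter fun a => f a = none) := by
            rw [Finset.card_filter]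
            exact Finset.sum_congr rfl fun a _ => hterm a
          have hkw := k_le (f := f)
          rw [hs, none_card] at hcol0
          omega

/-- Turn an `f` with support `S` into an embedding `S ↪ Fin w`. -/
def toEmb (S : Finset (Fin w)) (f : Fin w → Option (Fin w)) (h1 : PInj f)
    (h2 : ∀ a, (f a).isSome ↔ a ∈ S) : ↥S ↪ Fin w :=
  ⟨fun a => (f a.1).get ((h2 a.1).2 a.2), by
    intro a b hab
    apply Subtype.ext
    refine h1 a.1 b.1 ((f a.1).get ((h2 a.1).2 a.2)) (Option.some_get _).symm ?_
    exact ((Option.some_get ((h2 b.1).2 b.2)).symm).trans (congrArg some hab.symm)⟩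

def ofEmb (S : Finset (Fin w)) (e : ↥S ↪ Fin w) : Fin w → Option (Fin w) :=
  fun a => if h : a ∈ S then some (e ⟨a, h⟩) else none

lemma ofEmb_pinj (S : Finset (Fin w)) (e : ↥S ↪ Fin w) : PInj (ofEmb S e) := by
  intro a b c hac hbc
  unfold ofEmb at hac hbc
  by_cases ha : a ∈ S
  · by_cases hb : b ∈ S
    · rw [dif_pos ha] at hac
      rw [dif_pos hb] at hbc
      have : e ⟨a, ha⟩ = e ⟨b, hb⟩ := by
        rw [Option.some_inj.1 hac, Option.some_inj.1 hbc]
      have := e.injective this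
      exact congrArg Subtype.val this
    · rw [dif_neg hb] at hbc; exact absurd hbc (by simp)
  · rw [dif_neg ha] at hac; exact absurd hac (by simp)

lemma cardP (w : ℕ) :
    Nat.card {f : Fin w → Option (Fin w) // PInj f}
      = ∑ i ∈ Finset.range (w + 1), (w.choose i) ^ 2 * Nat.factorial i := by
  classical
  rw [Nat.card_eq_fintype_card, Fintype.card_subtype]
  rw [Finset.card_eq_sum_card_fiberwise
    (f := fun f => univ.filter fun a => (f a).isSome)
    (t := (univ : Finset (Finset (Fin w)))) (fun x _ => mem_univ _)]
  have hfib : ∀ S : Finset (Fin w),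
      #(filter (fun f => (univ.filter fun a => (f a).isSome) = S)
          (filter PInj univ)) = w.descFactorial #S := by
    intro S
    have hemb : #(univ : Finset (↥S ↪ Fin w)) = w.descFactorial #S := by
      rw [Finset.card_univ, Fintype.card_embedding_eq, Fintype.card_coe, Fintype.card_fin]
    rw [← hemb]
    have hmem : ∀ f ∈ (filter PInj (univ : Finset (Fin w → Option (Fin w)))).filter
        (fun f => (univ.filter fun a => (f a).isSome) = S),
        PInj f ∧ ∀ a : Fin w, ((f a).isSome ↔ a ∈ S) := by
      intro f hf
      rw [mem_filter, mem_filter] at hf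
      refine ⟨hf.1.2, fun a => ?_⟩
      constructor
      · intro h; rw [← hf.2]; simp [h]
      · intro h; rw [← hf.2] at h; simpa using h
    refine Finset.card_bij'
      (fun f hf => toEmb S f (hmem f hf).1 (hmem f hf).2)
      (fun e _ => ofEmb S e) (fun _ _ => mem_univ _) ?_ ?_ ?_
    · intro e _
      rw [mem_filter, mem_filter]
      refine ⟨⟨mem_univ _, ofEmb_pinj S e⟩, ?_⟩
      ext a
      simp only [mem_filter, mem_univ, true_and, ofEmb]
      by_cases h : a ∈ S <;> simp [h]
    · intro f hf
      funext a
      obtain ⟨hP, hsupp⟩ := hmem f hf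
      unfold ofEmb toEmb
      by_cases h : a ∈ S
      · simp only [dif_pos h]
        exact Option.some_get _
      · simp only [dif_neg h]
        have : ¬ (f a).isSome := fun hh => h ((hsupp a).1 hh)
        exact (Option.not_isSome_iff_eq_none.1 this).symm
    · intro e _
      apply Function.Embedding.ext
      intro a
      simp only [toEmb, ofEmb, Function.Embedding.coeFn_mk]
      have h := a.2
      simp [dif_pos h]
  rw [Finset.sum_congr rfl fun S _ => hfib S, ← Finset.powerset_univ, Finset.sum_powerset]
  have hcu : #(univ : Finset (Fin w)) = w := by simp
  rw [hcu]
  refine Finset.sum_congr rfl fun k hk => ?_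
  have hconst : ∀ S ∈ powersetCard k (univ : Finset (Fin w)),
      w.descFactorial #S = w.descFactorial k := by
    intro S hS; rw [(Finset.mem_powersetCard.1 hS).2]
  rw [Finset.sum_congr rfl hconst, Finset.sum_const, Finset.card_powersetCard, hcu,
    smul_eq_mul, Nat.descFactorial_eq_factorial_mul_choose, pow_two]
  ring

end HookAux

theorem hook_contingency_count (w n : ℕ) (hn : 2 * w + 1 ≤ n) :
    Nat.card {M : Matrix (Fin (w + 1)) (Fin (w + 1)) ℕ //
        (∀ i, ∑ j, M i j = if i = 0 then n - w else 1) ∧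
        (∀ j, ∑ i, M i j = if j = 0 then n - w else 1)}
      = ∑ i ∈ Finset.range (w + 1), (w.choose i) ^ 2 * Nat.factorial i := by
  classical
  have h := Nat.card_eq_of_bijective
    (α := {f : Fin w → Option (Fin w) // HookAux.PInj f})
    (β := {M : Matrix (Fin (w + 1)) (Fin (w + 1)) ℕ //
        (∀ i, ∑ j, M i j = if i = 0 then n - w else 1) ∧
        (∀ j, ∑ i, M i j = if j = 0 then n - w else 1)})
    (fun f => ⟨HookAux.mk w n f.1, HookAux.mk_row hn f.2, HookAux.mk_col hn f.2⟩)
    ⟨by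
      intro f f' hff
      exact Subtype.ext (HookAux.mk_injective (congrArg Subtype.val hff)),
     by
      rintro ⟨M, hM1, hM2⟩
      obtain ⟨f, hfP, hfM⟩ := HookAux.mk_surjective hn M hM1 hM2
      exact ⟨⟨f, hfP⟩, Subtype.ext hfM⟩⟩
  rw [← h, HookAux.cardP]
end

section
/- Let w ≥ 0 and let λ, μ be partitions of n with n ≥ 2w, such that the sum of all parts of λ except the largest is at most w, and similarly for μ. Then N_{λ,μ} ≤ u(w) = ∑_{i=0}^{w} C(w,i)^2 · i!, where N_{λ,μ} is the number of nonnegative-integer matrices with row sums λ and column sums μ. -/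
open Finset

/-- `Σ i : Fin (k+1), β i ≃ β 0 ⊕ Σ i : Fin k, β i.succ` -/
def sigmaFinSucc {k : ℕ} (β : Fin (k + 1) → Type*) :
    (Σ i, β i) ≃ β 0 ⊕ (Σ i : Fin k, β i.succ) where
  toFun x := Fin.cases (motive := fun i => β i → β 0 ⊕ (Σ i : Fin k, β i.succ))
    Sum.inl (fun i b => Sum.inr ⟨i, b⟩) x.1 x.2
  invFun s := Sum.elim (fun b => ⟨0, b⟩) (fun p => ⟨p.1.succ, p.2⟩) s
  left_inv := by
    rintro ⟨i, b⟩
    revert b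
    refine Fin.cases ?_ ?_ i <;> intro b <;> simp
  right_inv := by rintro (b | ⟨i, b⟩) <;> simp

/-- prefix-sum encoding equiv -/
def mySigmaEquiv : ∀ {k : ℕ} (c : Fin k → ℕ), (Σ i, Fin (c i)) ≃ Fin (∑ i, c i)
  | 0, c => by
    have h : ∑ i : Fin 0, c i = 0 := by simp
    haveI : IsEmpty (Fin (∑ i : Fin 0, c i)) := by rw [h]; infer_instance
    exact Equiv.equivOfIsEmpty _ _
  | k + 1, c =>
    (sigmaFinSucc _).trans <|
      ((Equiv.refl (Fin (c 0))).sumCongr (mySigmaEquiv fun i => c i.succ)).trans <|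
        finSumFinEquiv.trans (finCongr (Fin.sum_univ_succ c).symm)

def doubleFiberEquiv {k l : ℕ} (c : Fin k → Fin l → ℕ) (i : Fin k) (j : Fin l) :
    {u : Σ i' : Fin k, Σ j' : Fin l, Fin (c i' j') // u.1 = i ∧ u.2.1 = j} ≃ Fin (c i j) where
  toFun u := Fin.cast (congrArg₂ c u.2.1 u.2.2) u.1.2.2
  invFun m := ⟨⟨i, j, m⟩, rfl, rfl⟩
  left_inv := by rintro ⟨⟨i', j', m⟩, rfl, rfl⟩; rfl
  right_inv m := rfl

def swapSigma {k l : ℕ} (c : Fin k → Fin l → ℕ) :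
    (Σ i, Σ j, Fin (c i j)) ≃ (Σ j, Σ i, Fin (c i j)) where
  toFun u := ⟨u.2.1, u.1, u.2.2⟩
  invFun v := ⟨v.2.1, v.1, v.2.2⟩
  left_inv := fun ⟨_, _, _⟩ => rfl
  right_inv := fun ⟨_, _, _⟩ => rfl

lemma sigma_enc_inj {k w : ℕ} (d : Fin k → ℕ) (hw : ∑ i, d i ≤ w)
    {β : Fin k → Type*} (φ : ∀ i, β i → Fin (d i)) (hφ : ∀ i, Function.Injective (φ i)) :
    Function.Injective (fun p : Σ i, β i => Fin.castLE hw (mySigmaEquiv d ⟨p.1, φ p.1 p.2⟩)) := by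
  rintro ⟨i, x⟩ ⟨i', x'⟩ h
  simp only at h
  have h2 : (⟨i, φ i x⟩ : Σ i, Fin (d i)) = ⟨i', φ i' x'⟩ :=
    (mySigmaEquiv d).injective (Fin.castLE_injective hw h)
  obtain ⟨rfl, h3⟩ := Sigma.mk.inj_iff.mp h2
  exact congrArg (Sigma.mk i) (hφ i (eq_of_heq h3))

lemma decode_enc {k w : ℕ} (d : Fin k → ℕ) (hw : ∑ i, d i ≤ w) (q : Σ i, Fin (d i)) :
    ∃ hs : ((Fin.castLE hw (mySigmaEquiv d q) : Fin w) : ℕ) < ∑ i, d i,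
      ((mySigmaEquiv d).symm ⟨_, hs⟩).1 = q.1 := by
  have hs : ((Fin.castLE hw (mySigmaEquiv d q) : Fin w) : ℕ) < ∑ i, d i := by
    simpa using (mySigmaEquiv d q).isLt
  refine ⟨hs, ?_⟩
  have h1 : (⟨((Fin.castLE hw (mySigmaEquiv d q) : Fin w) : ℕ), hs⟩ : Fin (∑ i, d i))
      = mySigmaEquiv d q := by ext; simp
  rw [h1, Equiv.symm_apply_apply]

theorem middle_inj (w k l : ℕ) (a : Fin k → ℕ) (b : Fin l → ℕ)
    (hsa : ∑ i, a i ≤ w) (hsb : ∑ j, b j ≤ w) :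
    ∃ Φ : {A : Fin k → Fin l → ℕ // (∀ i, ∑ j, A i j ≤ a i) ∧ (∀ j, ∑ i, A i j ≤ b j)} →
        (Σ D : Finset (Fin w), (↥D ↪ Fin w)), Function.Injective Φ := by
  classical
  -- encoders / decoders independent of A
  set ea := mySigmaEquiv a with hea
  set eb := mySigmaEquiv b with heb
  set Rrow : Fin w → Option (Fin k) :=
    fun s => if hs : (s : ℕ) < ∑ i, a i then some ((ea.symm ⟨s, hs⟩).1) else none with hRrow
  set Rcol : Fin w → Option (Fin l) :=
    fun t => if ht : (t : ℕ) < ∑ j, b j then some ((eb.symm ⟨t, ht⟩).1) else none with hRcol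
  -- the map
  have main : ∀ A : {A : Fin k → Fin l → ℕ //
      (∀ i, ∑ j, A i j ≤ a i) ∧ (∀ j, ∑ i, A i j ≤ b j)},
      ∃ P : Σ D : Finset (Fin w), (↥D ↪ Fin w), ∀ i j,
        A.1 i j = Nat.card {d : ↥P.1 // Rrow d.1 = some i ∧ Rcol (P.2 d) = some j} := by
    rintro ⟨A, hA1, hA2⟩
    set φR : ∀ i, (Σ j, Fin (A i j)) → Fin (a i) :=
      fun i q => Fin.castLE (hA1 i) (mySigmaEquiv (A i) q) with hφR
    set φC : ∀ j, (Σ i, Fin (A i j)) → Fin (b j) :=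
      fun j q => Fin.castLE (hA2 j) (mySigmaEquiv (fun i => A i j) q) with hφC
    have hφRinj : ∀ i, Function.Injective (φR i) := fun i =>
      (Fin.castLE_injective _).comp (mySigmaEquiv (A i)).injective
    have hφCinj : ∀ j, Function.Injective (φC j) := fun j =>
      (Fin.castLE_injective _).comp (mySigmaEquiv (fun i => A i j)).injective
    set ρ : (Σ i, Σ j, Fin (A i j)) → Fin w :=
      fun u => Fin.castLE hsa (ea ⟨u.1, φR u.1 u.2⟩) with hρ
    set γ : (Σ i, Σ j, Fin (A i j)) → Fin w :=
      fun u => Fin.castLE hsb (eb ⟨(swapSigma A u).1, φC (swapSigma A u).1 (swapSigma A u).2⟩)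
      with hγ
    have hρinj : Function.Injective ρ := sigma_enc_inj a hsa φR hφRinj
    have hγinj : Function.Injective γ :=
      ((sigma_enc_inj b hsb φC hφCinj).comp (swapSigma A).injective : _)
    -- decode facts
    have hdecρ : ∀ u, Rrow (ρ u) = some u.1 := by
      intro u
      obtain ⟨hs, h2⟩ := decode_enc a hsa ⟨u.1, φR u.1 u.2⟩
      rw [hRrow]
      simp only [hρ]
      rw [dif_pos hs, h2]
    have hdecγ : ∀ u, Rcol (γ u) = some u.2.1 := by
      intro u
      obtain ⟨i0, j0, m0⟩ := u
      obtain ⟨hs, h2⟩ := decode_enc b hsb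
        ⟨(swapSigma A ⟨i0, j0, m0⟩).1, φC (swapSigma A ⟨i0, j0, m0⟩).1 (swapSigma A ⟨i0, j0, m0⟩).2⟩
      rw [hRcol]
      simp only [hγ]
      rw [dif_pos hs, h2]
      rfl
    -- build D and f
    set D : Finset (Fin w) := Finset.image ρ Finset.univ with hD
    have hbij : Function.Bijective
        (fun u : Σ i, Σ j, Fin (A i j) => (⟨ρ u, by simp [hD]⟩ : ↥D)) := by
      constructor
      · intro u u' h
        exact hρinj (congrArg Subtype.val h)
      · rintro ⟨x, hx⟩
        obtain ⟨u, -, rfl⟩ := Finset.mem_image.mp hx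
        exact ⟨u, rfl⟩
    set eD := Equiv.ofBijective _ hbij with heD
    set f : ↥D ↪ Fin w := ⟨fun d => γ (eD.symm d), hγinj.comp eD.symm.injective⟩ with hf
    refine ⟨⟨D, f⟩, fun i j => ?_⟩
    have e1 : {d : ↥D // Rrow d.1 = some i ∧ Rcol (f d) = some j} ≃
        {u : Σ i', Σ j', Fin (A i' j') // u.1 = i ∧ u.2.1 = j} := by
      refine (Equiv.subtypeEquiv eD.symm fun d => ?_)
      constructor
      · rintro ⟨h1, h2⟩
        constructor
        · have := hdecρ (eD.symm d)
          have hval : (d : Fin w) = ρ (eD.symm d) :=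
            (congrArg Subtype.val (eD.apply_symm_apply d)).symm
          rw [hval] at h1
          rw [this] at h1
          exact (Option.some.injEq _ _).mp h1
        · have := hdecγ (eD.symm d)
          have h2' : Rcol (γ (eD.symm d)) = some j := h2
          rw [this] at h2'
          exact (Option.some.injEq _ _).mp h2'
      · rintro ⟨h1, h2⟩
        constructor
        · have hval : (d : Fin w) = ρ (eD.symm d) :=
            (congrArg Subtype.val (eD.apply_symm_apply d)).symm
          rw [hval, hdecρ (eD.symm d), h1]
        · show Rcol (γ (eD.symm d)) = some j
          rw [hdecγ (eD.symm d), h2]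
    rw [Nat.card_congr (e1.trans (doubleFiberEquiv A i j)), Nat.card_eq_fintype_card,
      Fintype.card_fin]
  -- assemble
  choose Φ hΦ using main
  refine ⟨Φ, fun A A' h => ?_⟩
  apply Subtype.ext
  funext i j
  rw [hΦ A i j, hΦ A' i j, h]

theorem card_partialInj (w : ℕ) :
    Nat.card (Σ D : Finset (Fin w), (↥D ↪ Fin w))
      = ∑ i ∈ Finset.range (w + 1), (w.choose i) ^ 2 * Nat.factorial i := by
  classical
  rw [Nat.card_eq_fintype_card, Fintype.card_sigma]
  have h1 : ∀ D : Finset (Fin w), Fintype.card (↥D ↪ Fin w) = w.descFactorial D.card := by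
    intro D; rw [Fintype.card_embedding_eq, Fintype.card_coe, Fintype.card_fin]
  simp_rw [h1]
  have h2 : (∑ D : Finset (Fin w), w.descFactorial D.card)
      = ∑ D ∈ (Finset.univ : Finset (Fin w)).powerset, w.descFactorial D.card := by
    rw [Finset.powerset_univ]
  rw [h2, Finset.sum_powerset_apply_card (fun m => w.descFactorial m), Finset.card_univ,
    Fintype.card_fin]
  refine Finset.sum_congr rfl fun i _ => ?_
  rw [smul_eq_mul, Nat.descFactorial_eq_factorial_mul_choose]
  ring

theorem step1_inj (k l : ℕ) (lam : Fin (k + 1) → ℕ) (mu : Fin (l + 1) → ℕ) :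
    ∃ Ψ : {M : Matrix (Fin (k + 1)) (Fin (l + 1)) ℕ //
        (∀ i, ∑ j, M i j = lam i) ∧ (∀ j, ∑ i, M i j = mu j)} →
      {A : Fin k → Fin l → ℕ //
        (∀ i, ∑ j, A i j ≤ lam i.succ) ∧ (∀ j, ∑ i, A i j ≤ mu j.succ)},
      Function.Injective Ψ := by
  refine ⟨fun M => ⟨fun i j => M.1 i.succ j.succ, fun i => ?_, fun j => ?_⟩, ?_⟩
  · have h := M.2.1 i.succ
    rw [Fin.sum_univ_succ] at h
    show ∑ j : Fin l, M.1 i.succ j.succ ≤ lam i.succ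
    omega
  · have h := M.2.2 j.succ
    rw [Fin.sum_univ_succ] at h
    show ∑ i : Fin k, M.1 i.succ j.succ ≤ mu j.succ
    omega
  · rintro ⟨M, hM1, hM2⟩ ⟨M', hM1', hM2'⟩ h
    simp only [Subtype.mk.injEq] at h ⊢
    have hsub : ∀ (i : Fin k) (j : Fin l), M i.succ j.succ = M' i.succ j.succ :=
      fun i j => congrFun (congrFun h i) j
    have hcol0 : ∀ i : Fin k, M i.succ 0 = M' i.succ 0 := by
      intro i
      have e1 := hM1 i.succ
      have e2 := hM1' i.succ
      rw [Fin.sum_univ_succ] at e1 e2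
      have e3 : ∑ j : Fin l, M i.succ j.succ = ∑ j : Fin l, M' i.succ j.succ :=
        Finset.sum_congr rfl fun j _ => hsub i j
      omega
    have hrow0 : ∀ j : Fin l, M 0 j.succ = M' 0 j.succ := by
      intro j
      have e1 := hM2 j.succ
      have e2 := hM2' j.succ
      rw [Fin.sum_univ_succ] at e1 e2
      have e3 : ∑ i : Fin k, M i.succ j.succ = ∑ i : Fin k, M' i.succ j.succ :=
        Finset.sum_congr rfl fun i _ => hsub i j
      omega
    have h00 : M 0 0 = M' 0 0 := by
      have e1 := hM1 0
      have e2 := hM1' 0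
      rw [Fin.sum_univ_succ] at e1 e2
      have e3 : ∑ j : Fin l, M 0 j.succ = ∑ j : Fin l, M' 0 j.succ :=
        Finset.sum_congr rfl fun j _ => hrow0 j
      omega
    funext i j
    rcases Fin.eq_zero_or_eq_succ i with rfl | ⟨i', rfl⟩ <;>
      rcases Fin.eq_zero_or_eq_succ j with rfl | ⟨j', rfl⟩
    · exact h00
    · exact hrow0 j'
    · exact hcol0 i'
    · exact hsub i' j'

theorem contingency_count_le_u (w n k l : ℕ) (hn : 2 * w ≤ n)
    (lam : Fin (k + 1) → ℕ) (hlamanti : Antitone lam) (hlamsum : ∑ i, lam i = n)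
    (hlamw : ∑ i : Fin k, lam i.succ ≤ w)
    (mu : Fin (l + 1) → ℕ) (hmuanti : Antitone mu) (hmusum : ∑ j, mu j = n)
    (hmuw : ∑ j : Fin l, mu j.succ ≤ w) :
    Nat.card {M : Matrix (Fin (k + 1)) (Fin (l + 1)) ℕ //
        (∀ i, ∑ j, M i j = lam i) ∧ (∀ j, ∑ i, M i j = mu j)}
      ≤ ∑ i ∈ Finset.range (w + 1), (w.choose i) ^ 2 * Nat.factorial i := by
  classical
  obtain ⟨Ψ, hΨ⟩ := step1_inj k l lam mu
  obtain ⟨Φ, hΦ⟩ := middle_inj w k l (fun i => lam i.succ) (fun j => mu j.succ) hlamw hmuw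
  calc Nat.card {M : Matrix (Fin (k + 1)) (Fin (l + 1)) ℕ //
        (∀ i, ∑ j, M i j = lam i) ∧ (∀ j, ∑ i, M i j = mu j)}
      ≤ Nat.card (Σ D : Finset (Fin w), (↥D ↪ Fin w)) :=
        Nat.card_le_card_of_injective (Φ ∘ Ψ) (hΦ.comp hΨ)
    _ = ∑ i ∈ Finset.range (w + 1), (w.choose i) ^ 2 * Nat.factorial i := card_partialInj w
end

section
/- For the symmetric group S_3 acting on ℝ^3 by coordinate permutations, the signomial f(x) = e^{6x_1} + e^{6x_2} + e^{6x_3} + e^{x_1+x_2+x_3} - δ(e^{x_1+2x_2+2x_3} + e^{2x_1+x_2+2x_3} + e^{2x_1+2x_2+x_3}) is nonnegative on ℝ^3 when δ = (9/4)^{1/3}. -/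
open Real

lemma key_age (x₁ x₂ x₃ : ℝ) :
    (9 / 4 : ℝ) ^ ((1 : ℝ) / 3) * Real.exp (x₁ + 2 * x₂ + 2 * x₃) ≤
      (1/3) * Real.exp (x₁ + x₂ + x₃) + (1/6) * Real.exp (6 * x₁)
        + (5/12) * Real.exp (6 * x₂) + (5/12) * Real.exp (6 * x₃) := by
  have hp1 : (0:ℝ) ≤ Real.exp (x₁ + x₂ + x₃) := (Real.exp_pos _).le
  have hp2 : (0:ℝ) ≤ (3/2) * Real.exp (6 * x₁) :=
    mul_nonneg (by norm_num) (Real.exp_pos _).le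
  have hp3 : (0:ℝ) ≤ (3/2) * Real.exp (6 * x₂) :=
    mul_nonneg (by norm_num) (Real.exp_pos _).le
  have hp4 : (0:ℝ) ≤ (3/2) * Real.exp (6 * x₃) :=
    mul_nonneg (by norm_num) (Real.exp_pos _).le
  have h := Real.geom_mean_le_arith_mean4_weighted
    (by norm_num : (0:ℝ) ≤ 1/3) (by norm_num : (0:ℝ) ≤ 1/9)
    (by norm_num : (0:ℝ) ≤ 5/18) (by norm_num : (0:ℝ) ≤ 5/18)
    hp1 hp2 hp3 hp4 (by norm_num)
  have hthree : (0:ℝ) ≤ (3/2:ℝ) := by norm_num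
  rw [Real.mul_rpow hthree (Real.exp_pos _).le, Real.mul_rpow hthree (Real.exp_pos _).le,
      Real.mul_rpow hthree (Real.exp_pos _).le] at h
  have hδ : (9 / 4 : ℝ) ^ ((1 : ℝ) / 3)
      = (3/2:ℝ) ^ ((1:ℝ)/9) * ((3/2:ℝ) ^ ((5:ℝ)/18) * (3/2:ℝ) ^ ((5:ℝ)/18)) := by
    rw [← Real.rpow_add (by norm_num), ← Real.rpow_add (by norm_num)]
    norm_num
    rw [show (9/4:ℝ) = (3/2)^(2:ℕ) by norm_num, ← Real.rpow_natCast ((3/2:ℝ)) 2,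
        ← Real.rpow_mul (by norm_num)]
    norm_num
  calc (9 / 4 : ℝ) ^ ((1 : ℝ) / 3) * Real.exp (x₁ + 2 * x₂ + 2 * x₃)
      = Real.exp (x₁ + x₂ + x₃) ^ ((1:ℝ)/3) * ((3/2:ℝ) ^ ((1:ℝ)/9) * Real.exp (6*x₁) ^ ((1:ℝ)/9))
        * ((3/2:ℝ) ^ ((5:ℝ)/18) * Real.exp (6*x₂) ^ ((5:ℝ)/18))
        * ((3/2:ℝ) ^ ((5:ℝ)/18) * Real.exp (6*x₃) ^ ((5:ℝ)/18)) := by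
        rw [← Real.exp_mul, ← Real.exp_mul, ← Real.exp_mul, ← Real.exp_mul, hδ]
        have hE : Real.exp ((x₁+x₂+x₃)*(1/3)) * Real.exp (6*x₁*(1/9))
            * Real.exp (6*x₂*(5/18)) * Real.exp (6*x₃*(5/18))
            = Real.exp (x₁ + 2*x₂ + 2*x₃) := by
          rw [← Real.exp_add, ← Real.exp_add, ← Real.exp_add]; ring_nf
        rw [← hE]; ring
    _ ≤ 1 / 3 * Real.exp (x₁ + x₂ + x₃) + 1 / 9 * (3 / 2 * Real.exp (6 * x₁))
        + 5 / 18 * (3 / 2 * Real.exp (6 * x₂)) + 5 / 18 * (3 / 2 * Real.exp (6 * x₃)) := h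
    _ = (1/3) * Real.exp (x₁ + x₂ + x₃) + (1/6) * Real.exp (6 * x₁)
        + (5/12) * Real.exp (6 * x₂) + (5/12) * Real.exp (6 * x₃) := by ring

theorem symmetric_sage_example_nonneg :
    ∀ x₁ x₂ x₃ : ℝ,
      0 ≤ Real.exp (6 * x₁) + Real.exp (6 * x₂) + Real.exp (6 * x₃)
          + Real.exp (x₁ + x₂ + x₃)
          - ((9 / 4 : ℝ) ^ ((1 : ℝ) / 3)) *
            (Real.exp (x₁ + 2 * x₂ + 2 * x₃) + Real.exp (2 * x₁ + x₂ + 2 * x₃)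
              + Real.exp (2 * x₁ + 2 * x₂ + x₃)) := by
  intro x₁ x₂ x₃
  have h1 := key_age x₁ x₂ x₃
  have h2 := key_age x₂ x₃ x₁
  have h3 := key_age x₃ x₁ x₂
  have e1 : x₂ + 2 * x₃ + 2 * x₁ = 2 * x₁ + x₂ + 2 * x₃ := by ring
  have e2 : x₃ + 2 * x₁ + 2 * x₂ = 2 * x₁ + 2 * x₂ + x₃ := by ring
  have e3 : x₂ + x₃ + x₁ = x₁ + x₂ + x₃ := by ring
  have e4 : x₃ + x₁ + x₂ = x₁ + x₂ + x₃ := by ring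
  rw [e1, e3] at h2
  rw [e2, e4] at h3
  linarith
end
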